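/- For every natural number n ≥ 2, the set of 5-tuples (a,b,c,d,e) ∈ ℕ⁵ satisfying 4n·a + 2n·b + (2n+1)·c + 2·d + e = 2n + 2 has exactly n + 5 elements. -/

import Mathlib

/-! Since `n ≥ 2`, the coefficient `4n` exceeds `2n + 2`, so `a = 0`; likewise `b, c ≤ 1` and not
both equal `1`. Each of the three admissible choices of `(b, c)` leaves an equation `2d + e = m`
with `m ∈ {2n + 2, 2, 1}`, which has `m / 2 + 1` solutions, for a total of `(n + 2) + 2 + 1`. -/

open Finset

def twoMulAddSols (m : ℕ) : Finset (ℕ × ℕ) :=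
  (range (m / 2 + 1)).image fun d => (d, m - 2 * d)

theorem mem_twoMulAddSols {m : ℕ} {p : ℕ × ℕ} : p ∈ twoMulAddSols m ↔ 2 * p.1 + p.2 = m := by
  obtain ⟨d, e⟩ := p
  simp only [twoMulAddSols, mem_image, mem_range, Prod.mk.injEq]
  constructor
  · rintro ⟨d, hd, rfl, rfl⟩
    omega
  · intro h
    exact ⟨d, by omega, rfl, by omega⟩

theorem card_twoMulAddSols (m : ℕ) : (twoMulAddSols m).card = m / 2 + 1 := by
  rw [twoMulAddSols, card_image_of_injective _ fun d d' h => congrArg Prod.fst h, card_range]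

def withPrefix (b c : ℕ) : ℕ × ℕ ↪ ℕ × ℕ × ℕ × ℕ × ℕ :=
  ⟨fun p => (0, b, c, p.1, p.2), fun p q h => by simpa [Prod.ext_iff] using h⟩

theorem withPrefix_apply (b c : ℕ) (p : ℕ × ℕ) : withPrefix b c p = (0, b, c, p.1, p.2) := rfl

theorem mem_map_withPrefix {b c : ℕ} {s : Finset (ℕ × ℕ)} {t : ℕ × ℕ × ℕ × ℕ × ℕ} :
    t ∈ s.map (withPrefix b c) ↔
      t.1 = 0 ∧ t.2.1 = b ∧ t.2.2.1 = c ∧ (t.2.2.2.1, t.2.2.2.2) ∈ s := by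
  obtain ⟨a, b', c', d, e⟩ := t
  simp only [mem_map, withPrefix_apply, Prod.ext_iff]
  constructor
  · rintro ⟨p, hp, rfl, rfl, rfl, rfl, rfl⟩
    exact ⟨rfl, rfl, rfl, hp⟩
  · rintro ⟨rfl, rfl, rfl, hp⟩
    exact ⟨_, hp, rfl, rfl, rfl, rfl, rfl⟩

theorem disjoint_map_withPrefix {b c b' c' : ℕ} (h : (b, c) ≠ (b', c')) (s t : Finset (ℕ × ℕ)) :
    Disjoint (s.map (withPrefix b c)) (t.map (withPrefix b' c')) := by
  simp only [disjoint_left, mem_map, withPrefix_apply]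
  rintro _ ⟨p, -, rfl⟩ ⟨q, -, hq⟩
  simp only [Prod.mk.injEq] at hq
  exact h (by rw [hq.2.1, hq.2.2.1])

theorem weighted_sum_eq_iff {n a b c d e : ℕ} (hn : 2 ≤ n) :
    4 * n * a + 2 * n * b + (2 * n + 1) * c + 2 * d + e = 2 * n + 2 ↔
      a = 0 ∧ (b = 0 ∧ c = 0 ∧ 2 * d + e = 2 * n + 2 ∨ b = 1 ∧ c = 0 ∧ 2 * d + e = 2 ∨
        b = 0 ∧ c = 1 ∧ 2 * d + e = 1) := by
  constructor
  · intro h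
    have ha : a = 0 := by
      by_contra ha
      have : 4 * n ≤ 4 * n * a := Nat.le_mul_of_pos_right _ (Nat.pos_of_ne_zero ha)
      omega
    have hb : b ≤ 1 := by
      by_contra hb
      have : 2 * n * 2 ≤ 2 * n * b := Nat.mul_le_mul_left _ (by omega)
      omega
    have hc : c ≤ 1 := by
      by_contra hc
      have : (2 * n + 1) * 2 ≤ (2 * n + 1) * c := Nat.mul_le_mul_left _ (by omega)
      omega
    subst ha
    interval_cases b <;> interval_cases c <;> omega
  · rintro ⟨rfl, ⟨rfl, rfl, h⟩ | ⟨rfl, rfl, h⟩ | ⟨rfl, rfl, h⟩⟩ <;> omega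

theorem setOf_weighted_sum_eq {n : ℕ} (hn : 2 ≤ n) :
    {t : ℕ × ℕ × ℕ × ℕ × ℕ |
        4 * n * t.1 + 2 * n * t.2.1 + (2 * n + 1) * t.2.2.1 + 2 * t.2.2.2.1 + t.2.2.2.2
          = 2 * n + 2} =
      ↑((twoMulAddSols (2 * n + 2)).map (withPrefix 0 0) ∪
        (twoMulAddSols 2).map (withPrefix 1 0) ∪ (twoMulAddSols 1).map (withPrefix 0 1)) := by
  ext ⟨a, b, c, d, e⟩
  simp only [Set.mem_ofPred_eq, coe_union, Set.mem_union, mem_coe, mem_map_withPrefix,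
    mem_twoMulAddSols, weighted_sum_eq_iff hn]
  tauto

theorem statement10 (n : ℕ) (hn : 2 ≤ n) :
    {t : ℕ × ℕ × ℕ × ℕ × ℕ |
        4 * n * t.1 + 2 * n * t.2.1 + (2 * n + 1) * t.2.2.1 + 2 * t.2.2.2.1 + t.2.2.2.2
          = 2 * n + 2}.ncard = n + 5 := by
  rw [setOf_weighted_sum_eq hn, Set.ncard_coe_finset, card_union_of_disjoint,
    card_union_of_disjoint]
  · simp only [card_map, card_twoMulAddSols]
    omega
  · exact disjoint_map_withPrefix (by decide) _ _
  · rw [disjoint_union_left]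
    exact ⟨disjoint_map_withPrefix (by decide) _ _, disjoint_map_withPrefix (by decide) _ _⟩
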